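/- With Fourier's law q = -λ ∇T and the generalized Newton law Π = -(η_Vol - (2/3)η)(∇·v)I - 2η Sym(v⊗∇), the entropy production rate density Σ = -(q·∇T)/T² - (1/T) Π : Sym(v⊗∇) is nonnegative whenever λ ≥ 0, η ≥ 0, η_Vol ≥ 0, and T > 0. -/
import Mathlib


open Matrix BigOperators

/-- Frobenius inner product of two 3×3 real matrices. -/
def frob (A B : Matrix (Fin 3) (Fin 3) ℝ) : ℝ := ∑ i, ∑ j, A i j * B i j

/-- With Fourier's law `q = -λ g` (where `g = ∇T`) and the generalized
Newton law `Π = -(η_Vol - (2/3)η)(tr L)·I - 2η L` (where `L = Sym(v⊗∇)` is symmetric),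
the entropy production rate density `Σ = -(q·g)/T² - (1/T)(Pv : L)` is nonnegative
whenever `λ ≥ 0`, `η ≥ 0`, `η_Vol ≥ 0` and `T > 0`. -/
theorem entropy_production_nonneg
    (T lam η ηVol : ℝ) (hT : 0 < T) (hlam : 0 ≤ lam) (hη : 0 ≤ η) (hηV : 0 ≤ ηVol)
    (g : Fin 3 → ℝ) (L : Matrix (Fin 3) (Fin 3) ℝ) (hL : L.IsSymm)
    (q : Fin 3 → ℝ) (hq : q = fun i => -lam * g i)
    (Pv : Matrix (Fin 3) (Fin 3) ℝ)
    (hPv : Pv = (-(ηVol - (2 / 3) * η) * Matrix.trace L) • (1 : Matrix (Fin 3) (Fin 3) ℝ)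
          - (2 * η) • L) :
    0 ≤ -(∑ i, q i * g i) / T ^ 2 - (1 / T) * frob Pv L := by
  have h10 : L 1 0 = L 0 1 := hL.apply 0 1
  have h20 : L 2 0 = L 0 2 := hL.apply 0 2
  have h21 : L 2 1 = L 1 2 := hL.apply 1 2
  have h1 : 0 ≤ -(∑ i, q i * g i) := by
    subst hq
    simp only [Fin.sum_univ_three]
    nlinarith [sq_nonneg (g 0), sq_nonneg (g 1), sq_nonneg (g 2)]
  have h2 : 0 ≤ -(frob Pv L) := by
    subst hPv
    simp only [frob, Fin.sum_univ_three, Matrix.sub_apply, Matrix.smul_apply,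
      Matrix.one_apply, Matrix.trace, Matrix.diag, smul_eq_mul]
    norm_num [Fin.ext_iff]
    nlinarith [mul_nonneg hηV (sq_nonneg (L 0 0 + L 1 1 + L 2 2)),
      mul_nonneg hη (sq_nonneg (L 0 0 - L 1 1)),
      mul_nonneg hη (sq_nonneg (L 1 1 - L 2 2)),
      mul_nonneg hη (sq_nonneg (L 0 0 - L 2 2)),
      mul_nonneg hη (sq_nonneg (L 0 1)), mul_nonneg hη (sq_nonneg (L 0 2)),
      mul_nonneg hη (sq_nonneg (L 1 2)), mul_nonneg hη (sq_nonneg (L 1 0)),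
      mul_nonneg hη (sq_nonneg (L 2 0)), mul_nonneg hη (sq_nonneg (L 2 1))]
  have hA : 0 ≤ -(∑ i, q i * g i) / T ^ 2 := div_nonneg h1 (by positivity)
  have hB : 0 ≤ (1 / T) * (-(frob Pv L)) :=
    mul_nonneg (by positivity) h2
  linarith
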